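/- On the integers Z with iid weights, suppose the blocking interval [i,j] satisfies: (1) M_k^+ > M_ℓ^- for all k,ℓ ∈ [i,j], and (2) Σ_{i≤k≤j} M_k^+ > Σ_{i−1≤k≤j+1} M_k^-. Then every locally optimal admissible marking Ψ (assigning labels '+','-','0' to integers, with no two adjacent sites carrying opposite labels) has M_m' = '+' for some m ∈ [i,j]. -/
import Mathlib


/-- Labels for sites: `0`, `+` or `-`. -/
inductive ZMark | zero | plus | minus
deriving DecidableEq

/-- Two labels are opposite if one is `+` and the other is `-`. -/
def ZMark.opposite : ZMark → ZMark → Prop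
  | ZMark.plus, ZMark.minus => True
  | ZMark.minus, ZMark.plus => True
  | _, _ => False

/-- A marking of `ℤ` is admissible if no two adjacent sites carry opposite labels. -/
def zAdmissible (L : ℤ → ZMark) : Prop := ∀ k : ℤ, ¬ ZMark.opposite (L k) (L (k + 1))

/-- The score of site `k`: `M_k⁺` if labeled `+`, `M_k⁻` if labeled `-`, `0` if labeled `0`. -/
def zScore (Mp Mm : ℤ → ℝ) (L : ℤ → ZMark) (k : ℤ) : ℝ :=
  match L k with
  | ZMark.plus => Mp k
  | ZMark.minus => Mm k
  | ZMark.zero => 0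

/-- A marking is locally optimal if changing the labels on any finite set of sites
(preserving admissibility) does not strictly increase the total score. -/
def zLocallyOptimal (Mp Mm : ℤ → ℝ) (L : ℤ → ZMark) : Prop :=
  ∀ L' : ℤ → ZMark, zAdmissible L' →
    ∀ hfin : {k : ℤ | L' k ≠ L k}.Finite,
      ∑ k ∈ hfin.toFinset, (zScore Mp Mm L' k - zScore Mp Mm L k) ≤ 0

/-- If `[i,j]` is a blocking interval, i.e. (1) `M_k⁺ > M_ℓ⁻` for all `k, ℓ ∈ [i,j]`, and
(2) `Σ_{i≤k≤j} M_k⁺ > Σ_{i−1≤k≤j+1} M_k⁻`, then every locally optimal admissible marking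
assigns `+` to some site `m ∈ [i,j]`. -/
theorem stmt_2 (Mp Mm : ℤ → ℝ) (hMp : ∀ k, 0 ≤ Mp k) (hMm : ∀ k, 0 ≤ Mm k)
    (i j : ℤ) (hij : i ≤ j)
    (h1 : ∀ k ∈ Finset.Icc i j, ∀ l ∈ Finset.Icc i j, Mm l < Mp k)
    (h2 : ∑ k ∈ Finset.Icc (i - 1) (j + 1), Mm k < ∑ k ∈ Finset.Icc i j, Mp k)
    (L : ℤ → ZMark) (hadm : zAdmissible L) (hopt : zLocallyOptimal Mp Mm L) :
    ∃ m ∈ Finset.Icc i j, L m = ZMark.plus := by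
  by_contra hcon
  push_neg at hcon
  classical
  set L' : ℤ → ZMark := fun k =>
    if i ≤ k ∧ k ≤ j then ZMark.plus
    else if (k = i - 1 ∨ k = j + 1) ∧ L k = ZMark.minus then ZMark.zero
    else L k with hL'
  have hL'in : ∀ k, i ≤ k → k ≤ j → L' k = ZMark.plus := by
    intro k h1k h2k; simp [hL', h1k, h2k]
  have hL'nm : ∀ k, L' k ≠ ZMark.minus → True := fun _ _ => trivial
  have hL'out : ∀ k, k < i - 1 ∨ j + 1 < k → L' k = L k := by
    intro k hk
    have h1k : ¬ (i ≤ k ∧ k ≤ j) := by omega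
    have h2k : ¬ (k = i - 1 ∨ k = j + 1) := by omega
    simp [hL', h1k, h2k]
  have hnotmin : ∀ k, k = i - 1 ∨ k = j + 1 → L' k ≠ ZMark.minus := by
    intro k hk
    have h1k : ¬ (i ≤ k ∧ k ≤ j) := by omega
    by_cases hm : L k = ZMark.minus
    · simp [hL', h1k, hk, hm]
    · have hv : L' k = L k := by
        simp only [hL']
        rw [if_neg h1k, if_neg (fun hc => hm hc.2)]
      rw [hv]; exact hm
  have hadm' : zAdmissible L' := by
    intro k
    by_cases hko : i ≤ k ∧ k ≤ j
    · by_cases hk1 : k + 1 ≤ j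
      · rw [hL'in k hko.1 hko.2, hL'in (k+1) (by omega) hk1]
        simp [ZMark.opposite]
      · -- k = j, k+1 = j+1
        rw [hL'in k hko.1 hko.2]
        have := hnotmin (k+1) (by omega)
        cases h : L' (k+1) <;> simp [ZMark.opposite] at this ⊢
        exact this h
    · by_cases hk1 : i ≤ k + 1 ∧ k + 1 ≤ j
      · -- k = i - 1
        rw [hL'in (k+1) hk1.1 hk1.2]
        have := hnotmin k (by omega)
        cases h : L' k <;> simp [ZMark.opposite] at this ⊢
        exact this h
      · -- both outside [i,j]
        have hk' : k < i - 1 ∨ j ≤ k := by omega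
        rcases hk' with hk' | hk'
        · rw [hL'out k (by omega)]
          by_cases he : k + 1 = i - 1
          · have h2 : ¬ (i ≤ k+1 ∧ k+1 ≤ j) := by omega
            by_cases hm : L (k+1) = ZMark.minus
            · have hv : L' (k+1) = ZMark.zero := by
                simp only [hL']
                rw [if_neg h2, if_pos ⟨Or.inl he, hm⟩]
              rw [hv]
              cases h : L k <;> simp [ZMark.opposite]
            · have hv : L' (k+1) = L (k+1) := by
                simp only [hL']
                rw [if_neg h2, if_neg (fun hc => hm hc.2)]
              rw [hv]
              exact hadm k
          · rw [hL'out (k+1) (by omega)]; exact hadm k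
        · -- k ≥ j, k outside means k ≥ j+1
          have hkge : j + 1 ≤ k := by omega
          rw [hL'out (k+1) (by omega)]
          by_cases he : k = j + 1
          · have h2 : ¬ (i ≤ k ∧ k ≤ j) := by omega
            by_cases hm : L k = ZMark.minus
            · have hv : L' k = ZMark.zero := by
                simp only [hL']
                rw [if_neg h2, if_pos ⟨Or.inr he, hm⟩]
              rw [hv]
              cases h : L (k+1) <;> simp [ZMark.opposite]
            · have hv : L' k = L k := by
                simp only [hL']
                rw [if_neg h2, if_neg (fun hc => hm hc.2)]
              rw [hv]
              exact hadm k
          · rw [hL'out k (by omega)]; exact hadm k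
  have hfin : {k : ℤ | L' k ≠ L k}.Finite := by
    apply Set.Finite.subset (Finset.Icc (i-1) (j+1)).finite_toSet
    intro k hk
    simp only [Set.mem_setOf_eq] at hk
    simp only [Finset.coe_Icc, Set.mem_Icc]
    by_contra hko
    exact hk (hL'out k (by omega))
  have hsub : hfin.toFinset ⊆ Finset.Icc (i-1) (j+1) := by
    intro k hk
    simp only [Set.Finite.mem_toFinset, Set.mem_setOf_eq] at hk
    simp only [Finset.mem_Icc]
    by_contra hko
    exact hk (hL'out k (by omega))
  have key := hopt L' hadm' hfin
  have heq : ∑ k ∈ hfin.toFinset, (zScore Mp Mm L' k - zScore Mp Mm L k)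
      = ∑ k ∈ Finset.Icc (i-1) (j+1), (zScore Mp Mm L' k - zScore Mp Mm L k) := by
    apply Finset.sum_subset hsub
    intro k _ hk
    simp only [Set.Finite.mem_toFinset, Set.mem_setOf_eq, not_not] at hk
    simp [zScore, hk]
  -- split the interval
  have hsplit : ∀ f : ℤ → ℝ, ∑ k ∈ Finset.Icc (i-1) (j+1), f k
      = f (i-1) + ∑ k ∈ Finset.Icc i j, f k + f (j+1) := by
    intro f
    have e1 : Finset.Icc (i-1) (j+1) = insert (i-1) (Finset.Icc i (j+1)) := by
      ext k; simp only [Finset.mem_Icc, Finset.mem_insert]; omega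
    have e2 : Finset.Icc i (j+1) = insert (j+1) (Finset.Icc i j) := by
      ext k; simp only [Finset.mem_Icc, Finset.mem_insert]; omega
    rw [e1, Finset.sum_insert (by intro h; rw [Finset.mem_Icc] at h; omega), e2,
      Finset.sum_insert (by intro h; rw [Finset.mem_Icc] at h; omega)]
    ring
  -- bounds
  have hend : ∀ k, k = i - 1 ∨ k = j + 1 → -Mm k ≤ zScore Mp Mm L' k - zScore Mp Mm L k := by
    intro k hk
    have h1k : ¬ (i ≤ k ∧ k ≤ j) := by omega
    by_cases hm : L k = ZMark.minus
    · have hv : L' k = ZMark.zero := by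
        simp only [hL']
        rw [if_neg h1k, if_pos ⟨hk, hm⟩]
      simp [zScore, hv, hm]
    · have hv : L' k = L k := by
        simp only [hL']
        rw [if_neg h1k, if_neg (fun hc => hm hc.2)]
      have he : zScore Mp Mm L' k = zScore Mp Mm L k := by simp [zScore, hv]
      rw [he]
      have := hMm k
      linarith
  have hmid : ∀ k ∈ Finset.Icc i j, Mp k - Mm k ≤ zScore Mp Mm L' k - zScore Mp Mm L k := by
    intro k hk
    rw [Finset.mem_Icc] at hk
    rw [zScore, hL'in k hk.1 hk.2]
    have hknp := hcon k (Finset.mem_Icc.mpr hk)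
    have : zScore Mp Mm L k ≤ Mm k := by
      cases h : L k <;> simp [zScore, h]
      · exact hMm k
      · exact absurd h hknp
    simp only []
    linarith
  have hmidsum : ∑ k ∈ Finset.Icc i j, (Mp k - Mm k)
      ≤ ∑ k ∈ Finset.Icc i j, (zScore Mp Mm L' k - zScore Mp Mm L k) :=
    Finset.sum_le_sum hmid
  rw [Finset.sum_sub_distrib] at hmidsum
  have hMmsplit := hsplit Mm
  have hdsplit := hsplit (fun k => zScore Mp Mm L' k - zScore Mp Mm L k)
  have he1 := hend (i-1) (Or.inl rfl)
  have he2 := hend (j+1) (Or.inr rfl)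
  rw [heq, hdsplit] at key
  linarith
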